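/- Let x_0 ≥ 0, let σ : (x_0, ∞) → ℝ be twice differentiable and satisfy the differential equation (x σ″(x))² + 4 (x σ′(x) − σ(x)) (x σ′(x) − σ(x) + (σ′(x))²) = 0 for all x > x_0. Suppose there are real numbers a ≠ 0 and p > 0 such that lim_{x→∞} σ(x)/x^p = a, lim_{x→∞} σ′(x)/x^{p−1} = p a, and lim_{x→∞} σ″(x)/x^{p−2} = p(p−1) a. Then either p = 1, or p = 2 and a = −1/4. -/

import Mathlib

/-!
Divide the equation by the size `x ^ (2p)` of its dominant terms (by `x ^ (3p - 2)` when
`p > 2`) and write it in terms of `σ / x ^ p → a`, `σ' / x ^ (p - 1) → p a` and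
`σ'' / x ^ (p - 2)`. Letting `x → ∞` leaves the balance of the leading coefficients:
`(p - 1)² a² = 0` if `p < 2`, `a (a + 4a²) = 0` if `p = 2`, and `(p - 1) p² a³ = 0` if `p > 2`.
-/

open Real Filter Topology

/-- The σ-form of Painlevé V with `θ₀ = θ₁ = θ_∞ = 0`, at `x` and values `s, s', s''` of
`σ, σ', σ''`. -/
def painleveVSigmaForm (x s s' s'' : ℝ) : ℝ :=
  (x * s'') ^ 2 + 4 * (x * s' - s) * (x * s' - s + s' ^ 2)

lemma rpow_sub_two_eq {x : ℝ} (hx : x ≠ 0) (y : ℝ) : x ^ (y - 2) = x ^ y / x ^ 2 := by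
  exact_mod_cast rpow_sub_natCast hx y 2

lemma tendsto_rpow_sub_two_atTop_zero {p : ℝ} (hp : p < 2) :
    Tendsto (fun x : ℝ => x ^ (p - 2)) atTop (𝓝 0) := by
  simpa using tendsto_rpow_neg_atTop (sub_pos.2 hp)

lemma tendsto_rpow_two_sub_atTop_zero {p : ℝ} (hp : 2 < p) :
    Tendsto (fun x : ℝ => x ^ (2 - p)) atTop (𝓝 0) := by
  simpa using tendsto_rpow_neg_atTop (sub_pos.2 hp)

section Rescaling

variable {p x s s' s'' : ℝ}

lemma painleveVSigmaForm_div_rpow_eq_zero (hx : 0 < x)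
    (hE : painleveVSigmaForm x s s' s'' = 0) :
    (s'' / x ^ (p - 2)) ^ 2 * x ^ (-2 : ℝ)
      + 4 * (s' / x ^ (p - 1) - s / x ^ p)
        * (s' / x ^ (p - 1) - s / x ^ p + (s' / x ^ (p - 1)) ^ 2 * x ^ (p - 2)) = 0 := by
  have hxp : x ^ p ≠ 0 := (rpow_pos_of_pos hx p).ne'
  unfold painleveVSigmaForm at hE
  rw [rpow_sub_one hx.ne', rpow_sub_two_eq hx.ne', rpow_neg hx.le, rpow_two]
  field_simp
  linear_combination hE

lemma painleveVSigmaForm_div_rpow_eq_zero' (hx : 0 < x)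
    (hE : painleveVSigmaForm x s s' s'' = 0) :
    (s'' / x ^ (p - 2)) ^ 2 * x ^ (-p)
      + 4 * (s' / x ^ (p - 1) - s / x ^ p)
        * ((s' / x ^ (p - 1) - s / x ^ p) * x ^ (2 - p) + (s' / x ^ (p - 1)) ^ 2) = 0 := by
  have hxp : x ^ p ≠ 0 := (rpow_pos_of_pos hx p).ne'
  unfold painleveVSigmaForm at hE
  rw [rpow_sub_one hx.ne', rpow_sub_two_eq hx.ne', rpow_sub hx, rpow_neg hx.le, rpow_two]
  field_simp
  linear_combination x ^ 2 * hE

end Rescaling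

section Limits

variable {σ σ' σ'' : ℝ → ℝ} {p α β γ : ℝ}

lemma leading_balance_of_tendsto_rpow_sub_two {ℓ : ℝ}
    (hode : ∀ᶠ x in atTop, painleveVSigmaForm x (σ x) (σ' x) (σ'' x) = 0)
    (h1 : Tendsto (fun x => σ x / x ^ p) atTop (𝓝 α))
    (h2 : Tendsto (fun x => σ' x / x ^ (p - 1)) atTop (𝓝 β))
    (h3 : Tendsto (fun x => σ'' x / x ^ (p - 2)) atTop (𝓝 γ))
    (hℓ : Tendsto (fun x : ℝ => x ^ (p - 2)) atTop (𝓝 ℓ)) :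
    (β - α) * (β - α + β ^ 2 * ℓ) = 0 := by
  have hD := h2.sub h1
  have hlim := ((h3.pow 2).mul (tendsto_rpow_neg_atTop two_pos)).add
    (((tendsto_const_nhds (x := (4 : ℝ))).mul hD).mul (hD.add ((h2.pow 2).mul hℓ)))
  have hzero := tendsto_nhds_unique_of_eventuallyEq hlim tendsto_const_nhds <| by
    filter_upwards [hode, eventually_gt_atTop 0] with x hE hx
    exact painleveVSigmaForm_div_rpow_eq_zero hx hE
  linear_combination hzero / 4

lemma leading_balance_of_tendsto_rpow_two_sub {m : ℝ} (hp : 0 < p)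
    (hode : ∀ᶠ x in atTop, painleveVSigmaForm x (σ x) (σ' x) (σ'' x) = 0)
    (h1 : Tendsto (fun x => σ x / x ^ p) atTop (𝓝 α))
    (h2 : Tendsto (fun x => σ' x / x ^ (p - 1)) atTop (𝓝 β))
    (h3 : Tendsto (fun x => σ'' x / x ^ (p - 2)) atTop (𝓝 γ))
    (hm : Tendsto (fun x : ℝ => x ^ (2 - p)) atTop (𝓝 m)) :
    (β - α) * ((β - α) * m + β ^ 2) = 0 := by
  have hD := h2.sub h1
  have hlim := ((h3.pow 2).mul (tendsto_rpow_neg_atTop hp)).add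
    (((tendsto_const_nhds (x := (4 : ℝ))).mul hD).mul ((hD.mul hm).add (h2.pow 2)))
  have hzero := tendsto_nhds_unique_of_eventuallyEq hlim tendsto_const_nhds <| by
    filter_upwards [hode, eventually_gt_atTop 0] with x hE hx
    exact painleveVSigmaForm_div_rpow_eq_zero' hx hE
  linear_combination hzero / 4

end Limits

theorem painleveV_sigma_power_asymptotics (x0 : ℝ)
    (σ σ' σ'' : ℝ → ℝ)
    (hode : ∀ x, x0 < x →
      (x * σ'' x) ^ 2
        + 4 * (x * σ' x - σ x) * (x * σ' x - σ x + (σ' x) ^ 2) = 0)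
    (a p : ℝ) (ha : a ≠ 0) (hp : 0 < p)
    (h1 : Tendsto (fun x => σ x / x ^ p) atTop (nhds a))
    (h2 : Tendsto (fun x => σ' x / x ^ (p - 1)) atTop (nhds (p * a)))
    (h3 : Tendsto (fun x => σ'' x / x ^ (p - 2)) atTop (nhds (p * (p - 1) * a))) :
    p = 1 ∨ (p = 2 ∧ a = -1 / 4) := by
  have hode' : ∀ᶠ x in atTop, painleveVSigmaForm x (σ x) (σ' x) (σ'' x) = 0 :=
    (eventually_gt_atTop x0).mono hode
  rcases lt_trichotomy p 2 with hlt | rfl | hgt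
  · have h := leading_balance_of_tendsto_rpow_sub_two hode' h1 h2 h3
      (tendsto_rpow_sub_two_atTop_zero hlt)
    have : (p - 1) * a = 0 := pow_eq_zero_iff two_ne_zero |>.1 (by linear_combination h)
    exact .inl (by simpa [sub_eq_zero, ha] using this)
  · have h := leading_balance_of_tendsto_rpow_sub_two hode' h1 h2 h3
      (ℓ := 1) (by simp only [sub_self, rpow_zero, tendsto_const_nhds])
    have : a ^ 2 * (4 * a + 1) = 0 := by linear_combination h
    refine .inr ⟨rfl, ?_⟩
    rcases mul_eq_zero.1 this with h | h
    · exact absurd (pow_eq_zero_iff two_ne_zero |>.1 h) ha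
    · linarith
  · have h := leading_balance_of_tendsto_rpow_two_sub hp hode' h1 h2 h3
      (tendsto_rpow_two_sub_atTop_zero hgt)
    have : (p - 1) * p ^ 2 * a ^ 3 = 0 := by linear_combination h
    have hp1 : p - 1 ≠ 0 := by linarith
    simp [hp1, hp.ne', ha] at this
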